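/- If a and b are real numbers with a = Σ_{n≥1} a_n α^n where each a_n ∈ {0,2}, and b = Σ_{n≥1} u_n α^n where each u_n ∈ {0,2,-2}, and 0 < α < 1/3, then a + b belongs to the central α-Cantor set C_α = {Σ_{n≥1} ε_n α^n : ε_n ∈ {0,2}} if and only if a_n + u_n ∈ {0,2} for every n ∈ ℕ. -/
import Mathlib


/-- The central α-Cantor set: sums Σ_{n≥1} ε_n α^n with ε_n ∈ {0,2}. -/
def centralCantor (α : ℝ) : Set ℝ :=
  {x | ∃ ε : ℕ → ℝ, (∀ n, ε n = 0 ∨ ε n = 2) ∧ x = ∑' n : ℕ, ε n * α ^ (n + 1)}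

lemma summable_aux (α : ℝ) (h0 : 0 < α) (h1 : α < 1) (c : ℕ → ℝ) (hc : ∀ n, |c n| ≤ 4) :
    Summable (fun n => c n * α ^ (n + 1)) := by
  apply Summable.of_norm
  have hg : Summable (fun n : ℕ => 4 * α ^ (n + 1)) := by
    apply Summable.mul_left
    exact (summable_geometric_of_lt_one h0.le h1).comp_injective (add_left_injective 1)
  refine hg.of_nonneg_of_le (fun n => norm_nonneg _) (fun n => ?_)
  rw [norm_mul, Real.norm_eq_abs, Real.norm_eq_abs, abs_of_pos (pow_pos h0 _)]
  exact mul_le_mul_of_nonneg_right (hc n) (pow_pos h0 _).le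

set_option maxHeartbeats 1000000 in
lemma key (α : ℝ) (hα0 : 0 < α) (hα : α < 1/3) (c : ℕ → ℝ)
    (hc4 : ∀ n, |c n| ≤ 4) (hc2 : ∀ n, c n = 0 ∨ 2 ≤ |c n|)
    (hsum : ∑' n, c n * α ^ (n + 1) = 0) : ∀ n, c n = 0 := by
  have hα1 : α < 1 := by linarith
  have hS := summable_aux α hα0 hα1 c hc4
  intro N
  induction N using Nat.strong_induction_on with
  | _ N ih =>
    rcases hc2 N with h | h
    · exact h
    exfalso
    have hsplit := Summable.sum_add_tsum_nat_add (N + 1) hS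
    rw [hsum] at hsplit
    have hfin : ∑ i ∈ Finset.range (N + 1), c i * α ^ (i + 1) = c N * α ^ (N + 1) := by
      rw [Finset.sum_range_succ]
      have : ∑ i ∈ Finset.range N, c i * α ^ (i + 1) = 0 := by
        apply Finset.sum_eq_zero
        intro i hi
        rw [ih i (Finset.mem_range.mp hi), zero_mul]
      rw [this, zero_add]
    rw [hfin] at hsplit
    have heq : c N * α ^ (N + 1) = -∑' i : ℕ, c (i + (N + 1)) * α ^ (i + (N + 1) + 1) := by
      linarith
    have htail : ‖∑' i : ℕ, c (i + (N + 1)) * α ^ (i + (N + 1) + 1)‖ ≤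
        4 * α ^ (N + 2) * (1 - α)⁻¹ := by
      have hS2 : Summable (fun i => c (i + (N + 1)) * α ^ (i + (N + 1) + 1)) :=
        (summable_nat_add_iff (N + 1)).mpr hS
      have hSg : Summable (fun i : ℕ => 4 * α ^ (N + 2) * α ^ i) :=
        Summable.mul_left _ (summable_geometric_of_lt_one hα0.le hα1)
      have hle : ∀ i : ℕ, ‖c (i + (N + 1)) * α ^ (i + (N + 1) + 1)‖ ≤
          4 * α ^ (N + 2) * α ^ i := by
        intro i
        rw [norm_mul, Real.norm_eq_abs, Real.norm_eq_abs, abs_of_pos (pow_pos hα0 _)]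
        have hp : α ^ (i + (N + 1) + 1) = α ^ (N + 2) * α ^ i := by ring
        rw [hp]
        have := mul_le_mul_of_nonneg_right (hc4 (i + (N + 1)))
          (mul_nonneg (pow_pos hα0 (N + 2)).le (pow_pos hα0 i).le)
        nlinarith [abs_nonneg (c (i + (N + 1))), pow_pos hα0 (N + 2), pow_pos hα0 i]
      have hg : (∑' i : ℕ, 4 * α ^ (N + 2) * α ^ i) = 4 * α ^ (N + 2) * (1 - α)⁻¹ := by
        rw [tsum_mul_left, tsum_geometric_of_lt_one hα0.le hα1]
      calc ‖∑' i : ℕ, c (i + (N + 1)) * α ^ (i + (N + 1) + 1)‖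
          ≤ ∑' i : ℕ, ‖c (i + (N + 1)) * α ^ (i + (N + 1) + 1)‖ :=
            norm_tsum_le_tsum_norm hS2.norm
        _ ≤ ∑' i : ℕ, 4 * α ^ (N + 2) * α ^ i := Summable.tsum_le_tsum hle hS2.norm hSg
        _ = 4 * α ^ (N + 2) * (1 - α)⁻¹ := hg
    have htail' : ‖c N * α ^ (N + 1)‖ ≤ 4 * α ^ (N + 2) * (1 - α)⁻¹ := by
      rw [heq, norm_neg]; exact htail
    have hpow : (0:ℝ) < α ^ (N + 1) := pow_pos hα0 _
    have h2 : (2:ℝ) * α ^ (N + 1) ≤ 4 * α ^ (N + 2) * (1 - α)⁻¹ := by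
      calc (2:ℝ) * α ^ (N + 1) ≤ |c N| * α ^ (N + 1) :=
            mul_le_mul_of_nonneg_right h hpow.le
        _ = ‖c N * α ^ (N + 1)‖ := by
            rw [norm_mul, Real.norm_eq_abs, Real.norm_eq_abs, abs_of_pos hpow]
        _ ≤ 4 * α ^ (N + 2) * (1 - α)⁻¹ := htail'
    have h1α : (0:ℝ) < 1 - α := by linarith
    have h2' : 2 * α ^ (N + 1) * (1 - α) ≤ 4 * α ^ (N + 2) := by
      have h3 := mul_le_mul_of_nonneg_right h2 h1α.le
      have h4 : 4 * α ^ (N + 2) * (1 - α)⁻¹ * (1 - α) = 4 * α ^ (N + 2) := by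
        field_simp
      linarith [h3, h4.le, h4.ge]
    have hp2 : α ^ (N + 2) = α * α ^ (N + 1) := by ring
    nlinarith [hpow]

set_option maxHeartbeats 1000000 in
theorem stmt_0 (α : ℝ) (hα0 : 0 < α) (hα : α < 1/3)
    (a u : ℕ → ℝ)
    (ha : ∀ n, a n = 0 ∨ a n = 2)
    (hu : ∀ n, u n = 0 ∨ u n = 2 ∨ u n = -2) :
    (∑' n : ℕ, a n * α ^ (n + 1)) + (∑' n : ℕ, u n * α ^ (n + 1)) ∈ centralCantor α ↔
      ∀ n, a n + u n = 0 ∨ a n + u n = 2 := by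
  have hα1 : α < 1 := by linarith
  have ha4 : ∀ n, |a n| ≤ 4 := by
    intro n; rcases ha n with h | h <;> rw [h] <;> norm_num
  have hu4 : ∀ n, |u n| ≤ 4 := by
    intro n; rcases hu n with h | h | h <;> rw [h] <;> norm_num
  have hSa := summable_aux α hα0 hα1 a ha4
  have hSu := summable_aux α hα0 hα1 u hu4
  have hadd : (∑' n : ℕ, a n * α ^ (n + 1)) + (∑' n : ℕ, u n * α ^ (n + 1)) =
      ∑' n : ℕ, (a n + u n) * α ^ (n + 1) := by
    rw [← Summable.tsum_add hSa hSu]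
    congr 1; funext n; ring
  constructor
  · rintro ⟨ε, hε, heq⟩ n
    rw [hadd] at heq
    set c : ℕ → ℝ := fun n => a n + u n - ε n with hc
    have hc4 : ∀ m, |c m| ≤ 4 := by
      intro m
      rcases ha m with h1 | h1 <;> rcases hu m with h2 | h2 | h2 <;>
        rcases hε m with h3 | h3 <;> simp [hc, h1, h2, h3] <;> norm_num
    have hc2 : ∀ m, c m = 0 ∨ 2 ≤ |c m| := by
      intro m
      rcases ha m with h1 | h1 <;> rcases hu m with h2 | h2 | h2 <;>
        rcases hε m with h3 | h3 <;> simp [hc, h1, h2, h3] <;> norm_num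
    have hSc := summable_aux α hα0 hα1 c hc4
    have hSε : Summable (fun n => ε n * α ^ (n + 1)) := by
      apply summable_aux α hα0 hα1
      intro m; rcases hε m with h | h <;> rw [h] <;> norm_num
    have hau4 : ∀ m, |a m + u m| ≤ 4 := by
      intro m; rcases ha m with h1 | h1 <;> rcases hu m with h2 | h2 | h2 <;>
        rw [h1, h2] <;> norm_num
    have hSau : Summable (fun n => (a n + u n) * α ^ (n + 1)) :=
      summable_aux α hα0 hα1 _ hau4
    have hsum0 : ∑' m, c m * α ^ (m + 1) = 0 := by
      have h1 : ∀ m, c m * α ^ (m + 1) =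
          (a m + u m) * α ^ (m + 1) - ε m * α ^ (m + 1) := by
        intro m
        show (a m + u m - ε m) * α ^ (m + 1) = _
        ring
      calc ∑' m, c m * α ^ (m + 1)
          = ∑' m, ((a m + u m) * α ^ (m + 1) - ε m * α ^ (m + 1)) := tsum_congr h1
        _ = (∑' m, (a m + u m) * α ^ (m + 1)) - ∑' m, ε m * α ^ (m + 1) :=
            Summable.tsum_sub hSau hSε
        _ = 0 := by rw [heq]; ring
    have := key α hα0 hα c hc4 hc2 hsum0 n
    have hεn : a n + u n = ε n := by
      have : a n + u n - ε n = 0 := this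
      linarith
    rw [hεn]; exact hε n
  · intro h
    exact ⟨fun n => a n + u n, h, hadd⟩
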